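/- The three-dimensional lattice-flow field u₀ : ℝ³ → ℝ³ defined by u₀(x) = ( sin(2πx₁)·sin(2πx₂), cos(2πx₁)·cos(2πx₂), (√2/(2π))·sin(2πx₁)·cos(2πx₂) ) is a generalized Beltrami flow: it satisfies div u₀ = 0 everywhere and its convective term is a gradient, namely (u₀·∇)u₀ = −∇p₀ at every point, where p₀(x) = (1/4)( cos(4πx₁) − cos(4πx₂) ). -/

import Mathlib

/-- Partial derivative `∂ᵢ f` of a scalar field on `ℝ³`. -/
noncomputable def pd3 (i : Fin 3) (f : (Fin 3 → ℝ) → ℝ) (x : Fin 3 → ℝ) : ℝ :=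
  fderiv ℝ f x (Pi.single i 1)

/-- The 3D lattice-flow velocity field
`u₀(x) = (sin(2πx₁)sin(2πx₂), cos(2πx₁)cos(2πx₂), (√2/(2π))·sin(2πx₁)cos(2πx₂))`. -/
noncomputable def lattice3U0 (x : Fin 3 → ℝ) : Fin 3 → ℝ :=
  ![Real.sin (2 * Real.pi * x 0) * Real.sin (2 * Real.pi * x 1),
    Real.cos (2 * Real.pi * x 0) * Real.cos (2 * Real.pi * x 1),
    (Real.sqrt 2 / (2 * Real.pi)) * Real.sin (2 * Real.pi * x 0) * Real.cos (2 * Real.pi * x 1)]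

/-- The pressure `p₀(x) = (1/4)(cos(4πx₁) − cos(4πx₂))`. -/
noncomputable def lattice3P0 (x : Fin 3 → ℝ) : ℝ :=
  (1 / 4) * (Real.cos (4 * Real.pi * x 0) - Real.cos (4 * Real.pi * x 1))

/-!
Every component of `u₀` and `p₀` is a product or sum of a function of `x₁` and a function
of `x₂`, so the Jacobian is explicit and `x₃`-derivatives vanish. The horizontal part of `u₀`
is the skew gradient `(-∂₂Ψ, ∂₁Ψ)`, orthogonal to `∇Ψ`; this kills the third component of
`(u₀·∇)u₀`, while the first two collapse to `π sin(4πxᵢ)` up to sign by `sin² + cos² = 1`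
and the double-angle formula.
-/

open Real

section SeparableFields

variable {f g : ℝ → ℝ} {f' g' : ℝ} {x : Fin 3 → ℝ}

lemma pd3_eq_of_hasFDerivAt {F : (Fin 3 → ℝ) → ℝ} {L : (Fin 3 → ℝ) →L[ℝ] ℝ}
    (h : HasFDerivAt F L x) (j : Fin 3) : pd3 j F x = L (Pi.single j 1) := by
  rw [pd3, h.fderiv]

lemma hasFDerivAt_comp_apply (i : Fin 3) (h : HasDerivAt f f' (x i)) :
    HasFDerivAt (fun y : Fin 3 → ℝ => f (y i))
      (f' • ContinuousLinearMap.proj (R := ℝ) (φ := fun _ => ℝ) i) x :=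
  h.comp_hasFDerivAt x (hasFDerivAt_apply i x)

lemma pd3_mul_comp_apply (hf : HasDerivAt f f' (x 0)) (hg : HasDerivAt g g' (x 1)) (j : Fin 3) :
    pd3 j (fun y => f (y 0) * g (y 1)) x = ![f' * g (x 1), f (x 0) * g', 0] j := by
  rw [pd3_eq_of_hasFDerivAt ((hasFDerivAt_comp_apply 0 hf).fun_mul (hasFDerivAt_comp_apply 1 hg))]
  fin_cases j <;> simp [mul_comm]

lemma pd3_add_comp_apply (hf : HasDerivAt f f' (x 0)) (hg : HasDerivAt g g' (x 1)) (j : Fin 3) :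
    pd3 j (fun y => f (y 0) + g (y 1)) x = ![f', g', 0] j := by
  rw [pd3_eq_of_hasFDerivAt ((hasFDerivAt_comp_apply 0 hf).fun_add (hasFDerivAt_comp_apply 1 hg))]
  fin_cases j <;> simp

end SeparableFields

lemma hasDerivAt_sin_const_mul (c t : ℝ) :
    HasDerivAt (fun t => sin (c * t)) (c * cos (c * t)) t := by
  simpa [mul_comm] using ((hasDerivAt_id t).const_mul c).sin

lemma hasDerivAt_cos_const_mul (c t : ℝ) :
    HasDerivAt (fun t => cos (c * t)) (-(c * sin (c * t))) t := by
  simpa [mul_comm] using ((hasDerivAt_id t).const_mul c).cos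

section Jacobian

variable (x : Fin 3 → ℝ) (j : Fin 3)

lemma pd3_lattice3U0_zero : pd3 j (fun y => lattice3U0 y 0) x =
    ![2 * π * cos (2 * π * x 0) * sin (2 * π * x 1),
      2 * π * sin (2 * π * x 0) * cos (2 * π * x 1), 0] j :=
  (pd3_mul_comp_apply (hasDerivAt_sin_const_mul _ _) (hasDerivAt_sin_const_mul _ _) j).trans
    (by fin_cases j <;> simp [mul_comm, mul_left_comm, mul_assoc])

lemma pd3_lattice3U0_one : pd3 j (fun y => lattice3U0 y 1) x =
    ![-(2 * π * sin (2 * π * x 0) * cos (2 * π * x 1)),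
      -(2 * π * cos (2 * π * x 0) * sin (2 * π * x 1)), 0] j :=
  (pd3_mul_comp_apply (hasDerivAt_cos_const_mul _ _) (hasDerivAt_cos_const_mul _ _) j).trans
    (by fin_cases j <;> simp [mul_comm, mul_left_comm, mul_assoc])

lemma pd3_lattice3U0_two : pd3 j (fun y => lattice3U0 y 2) x =
    ![√2 * cos (2 * π * x 0) * cos (2 * π * x 1),
      -(√2 * sin (2 * π * x 0) * sin (2 * π * x 1)), 0] j :=
  (pd3_mul_comp_apply ((hasDerivAt_sin_const_mul _ _).const_mul (√2 / (2 * π)))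
    (hasDerivAt_cos_const_mul _ _) j).trans (by fin_cases j <;> simp [field])

lemma pd3_lattice3P0 : pd3 j lattice3P0 x =
    ![-(π * sin (4 * π * x 0)), π * sin (4 * π * x 1), 0] j := by
  have hsplit : lattice3P0 = fun y => 1 / 4 * cos (4 * π * y 0) + -(1 / 4) * cos (4 * π * y 1) :=
    funext fun y => by rw [lattice3P0]; ring
  rw [hsplit, pd3_add_comp_apply ((hasDerivAt_cos_const_mul _ _).const_mul _)
    ((hasDerivAt_cos_const_mul _ _).const_mul _)]
  fin_cases j <;> simp <;> ring

end Jacobian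

/-- the 3D lattice flow is a generalized Beltrami flow:
`div u₀ = 0` everywhere and the convective term is a gradient,
`(u₀·∇)u₀ = −∇p₀` at every point. -/
theorem lattice3_generalized_beltrami :
    (∀ x : Fin 3 → ℝ, (∑ i : Fin 3, pd3 i (fun y => lattice3U0 y i) x) = 0) ∧
    (∀ (x : Fin 3 → ℝ) (i : Fin 3),
      (∑ j : Fin 3, lattice3U0 x j * pd3 j (fun y => lattice3U0 y i) x)
        = -pd3 i lattice3P0 x) := by
  refine ⟨fun x => ?_, fun x i => ?_⟩
  · simp only [Fin.sum_univ_three, pd3_lattice3U0_zero, pd3_lattice3U0_one, pd3_lattice3U0_two]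
    simp
  · have hdouble (t : ℝ) : sin (4 * π * t) = 2 * sin (2 * π * t) * cos (2 * π * t) := by
      rw [← sin_two_mul]; ring_nf
    fin_cases i <;>
      simp only [Fin.zero_eta, Fin.mk_one, Fin.reduceFinMk, Fin.isValue, Fin.sum_univ_three,
        pd3_lattice3U0_zero, pd3_lattice3U0_one, pd3_lattice3U0_two,
        pd3_lattice3P0] <;>
      simp [lattice3U0, hdouble]
    · linear_combination
        2 * π * sin (2 * π * x 0) * cos (2 * π * x 0) * sin_sq_add_cos_sq (2 * π * x 1)
    · linear_combination
        -2 * π * sin (2 * π * x 1) * cos (2 * π * x 1) * sin_sq_add_cos_sq (2 * π * x 0)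
    · ring
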